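/- Let (ρ,σ) be density matrices on ℂ^n and (ρ′,σ′) be density matrices on ℂ^m. The following are equivalent: (i) for all α > 1, sup_α(ρ/σ) ≥ sup_α(ρ′/σ′) and inf_α(ρ/σ) ≤ inf_α(ρ′/σ′); (ii) ‖tσ − ρ‖₁ ≥ ‖tσ′ − ρ′‖₁ for all t ≥ 0. -/

import Mathlib

open scoped ComplexOrder

/-- The square root of a positive semidefinite matrix, as `Matrix.PosSemidef.sqrt` was defined
in the older Mathlib (since removed). -/
noncomputable def posSemidefSqrt {n : ℕ} {A : Matrix (Fin n) (Fin n) ℂ} (hA : A.PosSemidef) :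
    Matrix (Fin n) (Fin n) ℂ :=
  hA.1.eigenvectorUnitary.1 * Matrix.diagonal ((↑) ∘ (√·) ∘ hA.1.eigenvalues) *
  (star hA.1.eigenvectorUnitary : Matrix (Fin n) (Fin n) ℂ)

/-- The trace norm of a matrix, `‖A‖₁ = Tr[√(AᴴA)]`. -/
noncomputable def traceNorm {n : ℕ} (A : Matrix (Fin n) (Fin n) ℂ) : ℝ :=
  (posSemidefSqrt (Matrix.posSemidef_conjTranspose_mul_self A)).trace.re

/-- `sup_α(ρ/σ) = sup { Tr[Eρ]/Tr[Eσ] : α⁻¹·𝟙 ≤ E ≤ 𝟙 }`. -/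
noncomputable def supAlpha {n : ℕ} (α : ℝ) (ρ σ : Matrix (Fin n) (Fin n) ℂ) : ℝ :=
  sSup { x : ℝ | ∃ E : Matrix (Fin n) (Fin n) ℂ,
    (E - ((α⁻¹ : ℝ) : ℂ) • (1 : Matrix (Fin n) (Fin n) ℂ)).PosSemidef ∧
    ((1 : Matrix (Fin n) (Fin n) ℂ) - E).PosSemidef ∧
    x = ((E * ρ).trace.re) / ((E * σ).trace.re) }

/-- `inf_α(ρ/σ) = inf { Tr[Eρ]/Tr[Eσ] : α⁻¹·𝟙 ≤ E ≤ 𝟙 }`. -/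
noncomputable def infAlpha {n : ℕ} (α : ℝ) (ρ σ : Matrix (Fin n) (Fin n) ℂ) : ℝ :=
  sInf { x : ℝ | ∃ E : Matrix (Fin n) (Fin n) ℂ,
    (E - ((α⁻¹ : ℝ) : ℂ) • (1 : Matrix (Fin n) (Fin n) ℂ)).PosSemidef ∧
    ((1 : Matrix (Fin n) (Fin n) ℂ) - E).PosSemidef ∧
    x = ((E * ρ).trace.re) / ((E * σ).trace.re) }

/-!
For Hermitian `A` and `c ≤ 1`, the maximum of `Re Tr[E A]` over `c ≤ E ≤ 1` is
`((1 + c) Tr A + (1 - c) ‖A‖₁) / 2`, attained by the `E` that is `1` on the nonnegative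
eigenspace of `A` and `c` on the negative one. Applied to `A = ρ - tσ` and `A = tσ - ρ` with
`c = α⁻¹`, this turns `t ≤ sup_α(ρ/σ)` into `(1 + α⁻¹)(t - 1) ≤ (1 - α⁻¹)‖tσ - ρ‖₁`, and
`inf_α(ρ/σ) ≤ t` into the same inequality with `1 - t` in place of `t - 1`. Hence (ii) gives (i)
at once. Conversely, for `t ≠ 1` choose `α` so that the inequality for `(ρ', σ')` is an equality;
the case `t = 1` follows by continuity of `t ↦ ‖tσ - ρ‖₁`.
-/

open Matrix

section

variable {n : ℕ}

lemma traceNorm_neg (A : Matrix (Fin n) (Fin n) ℂ) : traceNorm (-A) = traceNorm A := by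
  unfold traceNorm
  congr 3
  rw [conjTranspose_neg, neg_mul_neg]

lemma posSemidefSqrt_eq_cfc {M : Matrix (Fin n) (Fin n) ℂ} (hM : M.PosSemidef) :
    posSemidefSqrt hM = cfc Real.sqrt M := by
  rw [hM.1.cfc_eq, IsHermitian.cfc, Unitary.conjStarAlgAut_apply]
  rfl

lemma eq_posSemidefSqrt_of_sq_eq {S M : Matrix (Fin n) (Fin n) ℂ} (hS : S.PosSemidef)
    (hM : M.PosSemidef) (h : S ^ 2 = M) : S = posSemidefSqrt hM := by
  have hspec : ∀ x ∈ spectrum ℝ S, 0 ≤ x := by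
    open scoped MatrixOrder in exact fun x hx => spectrum_nonneg_of_nonneg hS.nonneg hx
  have hSa : IsSelfAdjoint S := hS.1
  rw [posSemidefSqrt_eq_cfc, ← h, ← cfc_pow_id (R := ℝ) S 2, ← cfc_comp Real.sqrt (· ^ 2) S]
  conv_lhs => rw [← cfc_id' ℝ S]
  exact cfc_congr fun x hx => (Real.sqrt_sq (hspec x hx)).symm

lemma Matrix.IsHermitian.trace_cfc {A : Matrix (Fin n) (Fin n) ℂ} (hA : A.IsHermitian)
    (f : ℝ → ℝ) :
    (cfc f A).trace = ∑ i, (f (hA.eigenvalues i) : ℂ) := by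
  rw [hA.cfc_eq, IsHermitian.cfc, Unitary.conjStarAlgAut_apply, trace_mul_cycle,
    Unitary.coe_star_mul_self, one_mul, trace_diagonal]
  rfl

lemma Matrix.IsHermitian.re_trace_eq_sum_eigenvalues {A : Matrix (Fin n) (Fin n) ℂ}
    (hA : A.IsHermitian) : A.trace.re = ∑ i, hA.eigenvalues i := by
  simp [hA.trace_eq_sum_eigenvalues, Complex.re_sum]

lemma Matrix.IsHermitian.traceNorm_eq_sum_abs_eigenvalues {A : Matrix (Fin n) (Fin n) ℂ}
    (hA : A.IsHermitian) : traceNorm A = ∑ i, |hA.eigenvalues i| := by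
  have hAa : IsSelfAdjoint A := hA
  have habs : (cfc (fun x : ℝ => |x|) A).PosSemidef := by
    open scoped MatrixOrder in exact nonneg_iff_posSemidef.1 (cfc_nonneg fun x _ => abs_nonneg x)
  have hsq : cfc (fun x : ℝ => |x|) A ^ 2 = Aᴴ * A := by
    rw [← cfc_pow (fun x : ℝ => |x|) 2 A, cfc_congr fun x _ => sq_abs x, cfc_pow_id A 2,
      pow_two, hA.eq]
  rw [traceNorm, ← eq_posSemidefSqrt_of_sq_eq habs _ hsq, hA.trace_cfc]
  simp [Complex.re_sum]

lemma Matrix.IsHermitian.abs_re_trace_le_traceNorm {A : Matrix (Fin n) (Fin n) ℂ}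
    (hA : A.IsHermitian) : |A.trace.re| ≤ traceNorm A := by
  rw [hA.re_trace_eq_sum_eigenvalues, hA.traceNorm_eq_sum_abs_eigenvalues]
  exact Finset.abs_sum_le_sum_abs _ _

lemma mul_le_of_mem_Icc {c f : ℝ} (hf : f ∈ Set.Icc c 1) (x : ℝ) :
    x * f ≤ ((1 + c) * x + (1 - c) * |x|) / 2 := by
  cases abs_cases x <;> nlinarith [hf.1, hf.2]

lemma mul_ite_nonneg_eq (c x : ℝ) :
    x * (if 0 ≤ x then 1 else c) = ((1 + c) * x + (1 - c) * |x|) / 2 := by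
  split_ifs with hx
  · rw [abs_of_nonneg hx]; ring
  · rw [abs_of_neg (not_le.1 hx)]; ring

section Window

variable {c : ℝ} {E U : Matrix (Fin n) (Fin n) ℂ}

lemma le_re_diag_star_mul_mul (hlo : (E - (c : ℂ) • 1).PosSemidef)
    (hU : U ∈ unitaryGroup (Fin n) ℂ) (i : Fin n) : c ≤ ((star U * E * U) i i).re := by
  have h := (hlo.conjTranspose_mul_mul_same U).diag_nonneg (i := i)
  rw [← star_eq_conjTranspose, mul_sub, sub_mul, mul_smul_comm, mul_one, smul_mul_assoc,
    Unitary.star_mul_self_of_mem hU] at h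
  simpa using (Complex.nonneg_iff.1 h).1

lemma re_diag_star_mul_mul_le_one (hhi : (1 - E).PosSemidef) (hU : U ∈ unitaryGroup (Fin n) ℂ)
    (i : Fin n) : ((star U * E * U) i i).re ≤ 1 := by
  have h := (hhi.conjTranspose_mul_mul_same U).diag_nonneg (i := i)
  rw [← star_eq_conjTranspose, mul_sub, sub_mul, mul_one, Unitary.star_mul_self_of_mem hU] at h
  simpa using (Complex.nonneg_iff.1 h).1

lemma re_trace_mul_conj_diagonal (E U : Matrix (Fin n) (Fin n) ℂ) (d : Fin n → ℝ) :
    (E * (U * diagonal (RCLike.ofReal ∘ d) * star U)).trace.re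
      = ∑ i, d i * ((star U * E * U) i i).re := by
  rw [← Matrix.mul_assoc, trace_mul_cycle, ← Matrix.mul_assoc, trace, Complex.re_sum]
  simp [mul_diagonal, mul_comm]

lemma Matrix.IsHermitian.exists_unitary_re_trace_mul_eq {A : Matrix (Fin n) (Fin n) ℂ}
    (hA : A.IsHermitian) : ∃ U ∈ unitaryGroup (Fin n) ℂ, ∀ E : Matrix (Fin n) (Fin n) ℂ,
      (E * A).trace.re = ∑ i, hA.eigenvalues i * ((star U * E * U) i i).re := by
  refine ⟨_, hA.eigenvectorUnitary.2, fun E => ?_⟩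
  conv_lhs => rw [hA.spectral_theorem, Unitary.conjStarAlgAut_apply]
  exact re_trace_mul_conj_diagonal E _ _

lemma re_trace_mul_mem_Icc (hlo : (E - (c : ℂ) • 1).PosSemidef) (hhi : (1 - E).PosSemidef)
    {B : Matrix (Fin n) (Fin n) ℂ} (hB : B.PosSemidef) (hBtr : B.trace = 1) :
    (E * B).trace.re ∈ Set.Icc c 1 := by
  have hsum : ∑ i, hB.1.eigenvalues i = 1 := by
    rw [← hB.1.re_trace_eq_sum_eigenvalues, hBtr, Complex.one_re]
  obtain ⟨U, hU, htr⟩ := hB.1.exists_unitary_re_trace_mul_eq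
  rw [htr]
  constructor
  · calc c = ∑ i, hB.1.eigenvalues i * c := by rw [← Finset.sum_mul, hsum, one_mul]
      _ ≤ _ := Finset.sum_le_sum fun i _ =>
        mul_le_mul_of_nonneg_left (le_re_diag_star_mul_mul hlo hU i) (hB.eigenvalues_nonneg i)
  · calc _ ≤ ∑ i, hB.1.eigenvalues i := Finset.sum_le_sum fun i _ =>
          mul_le_of_le_one_right (hB.eigenvalues_nonneg i) (re_diag_star_mul_mul_le_one hhi hU i)
      _ = 1 := hsum

lemma Matrix.IsHermitian.trace_add_traceNorm_div_two_eq_sum {A : Matrix (Fin n) (Fin n) ℂ}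
    (hA : A.IsHermitian) (c : ℝ) :
    ((1 + c) * A.trace.re + (1 - c) * traceNorm A) / 2
      = ∑ i, ((1 + c) * hA.eigenvalues i + (1 - c) * |hA.eigenvalues i|) / 2 := by
  rw [hA.re_trace_eq_sum_eigenvalues, hA.traceNorm_eq_sum_abs_eigenvalues, Finset.mul_sum,
    Finset.mul_sum, ← Finset.sum_add_distrib, Finset.sum_div]

lemma Matrix.IsHermitian.re_trace_mul_le {A : Matrix (Fin n) (Fin n) ℂ} (hA : A.IsHermitian)
    (hlo : (E - (c : ℂ) • 1).PosSemidef) (hhi : (1 - E).PosSemidef) :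
    (E * A).trace.re ≤ ((1 + c) * A.trace.re + (1 - c) * traceNorm A) / 2 := by
  obtain ⟨U, hU, htr⟩ := hA.exists_unitary_re_trace_mul_eq
  rw [hA.trace_add_traceNorm_div_two_eq_sum, htr]
  exact Finset.sum_le_sum fun i _ => mul_le_of_mem_Icc
    ⟨le_re_diag_star_mul_mul hlo hU i, re_diag_star_mul_mul_le_one hhi hU i⟩ _

lemma posSemidef_conj_diagonal {d : Fin n → ℝ} (hd : 0 ≤ d) (U : Matrix (Fin n) (Fin n) ℂ) :
    (U * diagonal (RCLike.ofReal ∘ d) * star U).PosSemidef := by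
  rw [star_eq_conjTranspose]
  exact (PosSemidef.diagonal fun i => by simpa using hd i).mul_mul_conjTranspose_same U

lemma conj_diagonal_sub (U : Matrix (Fin n) (Fin n) ℂ) (d e : Fin n → ℝ) :
    U * diagonal (RCLike.ofReal ∘ (d - e)) * star U
      = U * diagonal (RCLike.ofReal ∘ d) * star U - U * diagonal (RCLike.ofReal ∘ e) * star U := by
  rw [← Matrix.sub_mul, ← Matrix.mul_sub, diagonal_sub]
  congr 3
  funext i
  simp

lemma conj_diagonal_const (hU : U ∈ unitaryGroup (Fin n) ℂ) (a : ℝ) :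
    U * diagonal (RCLike.ofReal ∘ fun _ => a) * star U = (a : ℂ) • 1 := by
  rw [show diagonal (RCLike.ofReal ∘ fun _ => a) = (a : ℂ) • (1 : Matrix (Fin n) (Fin n) ℂ) from
    (smul_one_eq_diagonal _).symm, mul_smul_comm, Matrix.mul_one, smul_mul_assoc,
    Unitary.mul_star_self_of_mem hU]

lemma Matrix.IsHermitian.exists_re_trace_mul_eq {A : Matrix (Fin n) (Fin n) ℂ}
    (hA : A.IsHermitian) (hc : c ≤ 1) :
    ∃ E : Matrix (Fin n) (Fin n) ℂ, (E - (c : ℂ) • 1).PosSemidef ∧ (1 - E).PosSemidef ∧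
      (E * A).trace.re = ((1 + c) * A.trace.re + (1 - c) * traceNorm A) / 2 := by
  obtain ⟨U, hU, htr⟩ := hA.exists_unitary_re_trace_mul_eq
  set w : Fin n → ℝ := fun i => if 0 ≤ hA.eigenvalues i then 1 else c
  refine ⟨U * diagonal (RCLike.ofReal ∘ w) * star U, ?_, ?_, ?_⟩
  · rw [← conj_diagonal_const hU c, ← conj_diagonal_sub]
    refine posSemidef_conj_diagonal (fun i => ?_) U
    by_cases h : 0 ≤ hA.eigenvalues i <;> simp [w, h, hc]
  · have h1 := conj_diagonal_const hU 1
    rw [Complex.ofReal_one, one_smul] at h1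
    rw [← h1, ← conj_diagonal_sub]
    refine posSemidef_conj_diagonal (fun i => ?_) U
    by_cases h : 0 ≤ hA.eigenvalues i <;> simp [w, h, hc]
  · rw [hA.trace_add_traceNorm_div_two_eq_sum, htr]
    have hUU := Unitary.star_mul_self_of_mem hU
    have hD : star U * (U * diagonal (RCLike.ofReal ∘ w) * star U) * U
        = diagonal (RCLike.ofReal ∘ w) := by
      rw [← Matrix.mul_assoc, ← Matrix.mul_assoc, hUU, Matrix.one_mul, Matrix.mul_assoc, hUU,
        Matrix.mul_one]
    simp only [hD, diagonal_apply_eq]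
    exact Finset.sum_congr rfl fun i _ => mul_ite_nonneg_eq c _

end Window

def IsDensityMatrix (ρ : Matrix (Fin n) (Fin n) ℂ) : Prop :=
  ρ.PosSemidef ∧ ρ.trace = 1

lemma isHermitian_smul_sub {ρ σ : Matrix (Fin n) (Fin n) ℂ} (hρ : ρ.IsHermitian)
    (hσ : σ.IsHermitian) (t : ℝ) : ((t : ℂ) • σ - ρ).IsHermitian :=
  (hσ.smul (Complex.conj_ofReal t)).sub hρ

lemma re_trace_mul_smul_sub (E ρ σ : Matrix (Fin n) (Fin n) ℂ) (t : ℝ) :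
    (E * ((t : ℂ) • σ - ρ)).trace.re = t * (E * σ).trace.re - (E * ρ).trace.re := by
  simp [Matrix.mul_sub, trace_sub]

lemma traceNorm_smul_sub_le {ρ σ : Matrix (Fin n) (Fin n) ℂ} (hρ : ρ.IsHermitian)
    (hσ : IsDensityMatrix σ) (t s : ℝ) :
    traceNorm ((t : ℂ) • σ - ρ) ≤ traceNorm ((s : ℂ) • σ - ρ) + dist t s := by
  obtain ⟨E, hlo, hhi, hE⟩ :=
    (isHermitian_smul_sub hρ hσ.1.1 t).exists_re_trace_mul_eq (c := -1) (by norm_num)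
  have hub := (isHermitian_smul_sub hρ hσ.1.1 s).re_trace_mul_le hlo hhi
  have hEσ := re_trace_mul_mem_Icc hlo hhi hσ.1 hσ.2
  have hlip : (t - s) * (E * σ).trace.re ≤ dist t s := by
    rw [Real.dist_eq]
    calc (t - s) * (E * σ).trace.re ≤ |(t - s) * (E * σ).trace.re| := le_abs_self _
      _ ≤ |t - s| := by
        rw [abs_mul]; exact mul_le_of_le_one_right (abs_nonneg _) (abs_le.2 hEσ)
  rw [re_trace_mul_smul_sub] at hE hub
  linarith

lemma continuous_traceNorm_smul_sub {ρ σ : Matrix (Fin n) (Fin n) ℂ} (hρ : ρ.IsHermitian)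
    (hσ : IsDensityMatrix σ) : Continuous fun t : ℝ => traceNorm ((t : ℂ) • σ - ρ) :=
  (LipschitzWith.of_le_add (traceNorm_smul_sub_le hρ hσ)).continuous

def testRatios (α : ℝ) (ρ σ : Matrix (Fin n) (Fin n) ℂ) : Set ℝ :=
  { x : ℝ | ∃ E : Matrix (Fin n) (Fin n) ℂ,
    (E - ((α⁻¹ : ℝ) : ℂ) • (1 : Matrix (Fin n) (Fin n) ℂ)).PosSemidef ∧
    ((1 : Matrix (Fin n) (Fin n) ℂ) - E).PosSemidef ∧
    x = ((E * ρ).trace.re) / ((E * σ).trace.re) }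

section Ratios

variable {α : ℝ} {ρ σ : Matrix (Fin n) (Fin n) ℂ}

lemma one_mem_testRatios (hα : 1 < α) (hρtr : ρ.trace = 1) (hσtr : σ.trace = 1) :
    (1 : ℝ) ∈ testRatios α ρ σ := by
  refine ⟨1, ?_, by simpa using PosSemidef.zero, by simp [hρtr, hσtr]⟩
  rw [show (1 : Matrix (Fin n) (Fin n) ℂ) - ((α⁻¹ : ℝ) : ℂ) • 1 = ((1 - α⁻¹ : ℝ) : ℂ) • 1 by
    simp [sub_smul]]
  exact PosSemidef.one.smul (Complex.zero_le_real.2 (sub_nonneg.2 (inv_le_one_of_one_le₀ hα.le)))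

lemma testRatios_subset_Icc (hα : 1 < α) (hρ : IsDensityMatrix ρ) (hσ : IsDensityMatrix σ) :
    testRatios α ρ σ ⊆ Set.Icc 0 α := by
  rintro _ ⟨E, hlo, hhi, rfl⟩
  have hc : 0 < α⁻¹ := inv_pos.2 (by linarith)
  have hnum := re_trace_mul_mem_Icc hlo hhi hρ.1 hρ.2
  have hden := re_trace_mul_mem_Icc hlo hhi hσ.1 hσ.2
  refine ⟨div_nonneg (hc.le.trans hnum.1) (hc.le.trans hden.1), ?_⟩
  rw [div_le_iff₀ (hc.trans_le hden.1)]
  calc (E * ρ).trace.re ≤ α * α⁻¹ := by rw [mul_inv_cancel₀ (by linarith)]; exact hnum.2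
    _ ≤ α * (E * σ).trace.re := mul_le_mul_of_nonneg_left hden.1 (by linarith)

lemma one_le_supAlpha (hα : 1 < α) (hρ : IsDensityMatrix ρ) (hσ : IsDensityMatrix σ) :
    1 ≤ supAlpha α ρ σ :=
  le_csSup (bddAbove_Icc.mono (testRatios_subset_Icc hα hρ hσ)) (one_mem_testRatios hα hρ.2 hσ.2)

lemma infAlpha_nonneg (hα : 1 < α) (hρ : IsDensityMatrix ρ) (hσ : IsDensityMatrix σ) :
    0 ≤ infAlpha α ρ σ :=
  le_csInf ⟨1, one_mem_testRatios hα hρ.2 hσ.2⟩ fun _ hx => (testRatios_subset_Icc hα hρ hσ hx).1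

lemma le_supAlpha_iff (hα : 1 < α) (hρ : IsDensityMatrix ρ) (hσ : IsDensityMatrix σ) (t : ℝ) :
    t ≤ supAlpha α ρ σ ↔
      (1 + α⁻¹) * (t - 1) ≤ (1 - α⁻¹) * traceNorm ((t : ℂ) • σ - ρ) := by
  have hc : 0 < α⁻¹ := inv_pos.2 (by linarith)
  have hA := (isHermitian_smul_sub hρ.1.1 hσ.1.1 t).neg
  have htr : (-((t : ℂ) • σ - ρ)).trace.re = 1 - t := by simp [trace_sub, hρ.2, hσ.2]
  have hgap : ∀ E : Matrix (Fin n) (Fin n) ℂ,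
      (E * -((t : ℂ) • σ - ρ)).trace.re = (E * ρ).trace.re - t * (E * σ).trace.re := fun E => by
    rw [Matrix.mul_neg, trace_neg, Complex.neg_re, re_trace_mul_smul_sub, neg_sub]
  constructor
  · intro h
    refine le_of_forall_pos_lt_add fun ε hε => ?_
    obtain ⟨_, ⟨E, hlo, hhi, rfl⟩, hx⟩ := exists_lt_of_lt_csSup
      ⟨1, one_mem_testRatios hα hρ.2 hσ.2⟩ (show t - ε / 2 < supAlpha α ρ σ by linarith)
    have hden := re_trace_mul_mem_Icc hlo hhi hσ.1 hσ.2
    rw [lt_div_iff₀ (hc.trans_le hden.1)] at hx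
    have hub := hA.re_trace_mul_le hlo hhi
    rw [hgap, htr, traceNorm_neg] at hub
    nlinarith [hden.2]
  · intro h
    obtain ⟨E, hlo, hhi, hE⟩ := hA.exists_re_trace_mul_eq (inv_le_one_of_one_le₀ hα.le)
    rw [hgap, htr, traceNorm_neg] at hE
    have hden := re_trace_mul_mem_Icc hlo hhi hσ.1 hσ.2
    refine le_csSup_of_le (bddAbove_Icc.mono (testRatios_subset_Icc hα hρ hσ)) ⟨E, hlo, hhi, rfl⟩ ?_
    rw [le_div_iff₀ (hc.trans_le hden.1)]
    linarith

lemma infAlpha_le_iff (hα : 1 < α) (hρ : IsDensityMatrix ρ) (hσ : IsDensityMatrix σ) (t : ℝ) :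
    infAlpha α ρ σ ≤ t ↔
      (1 + α⁻¹) * (1 - t) ≤ (1 - α⁻¹) * traceNorm ((t : ℂ) • σ - ρ) := by
  have hc : 0 < α⁻¹ := inv_pos.2 (by linarith)
  have hA := isHermitian_smul_sub hρ.1.1 hσ.1.1 t
  have htr : ((t : ℂ) • σ - ρ).trace.re = t - 1 := by simp [trace_sub, hρ.2, hσ.2]
  constructor
  · intro h
    refine le_of_forall_pos_lt_add fun ε hε => ?_
    obtain ⟨_, ⟨E, hlo, hhi, rfl⟩, hx⟩ := exists_lt_of_csInf_lt
      ⟨1, one_mem_testRatios hα hρ.2 hσ.2⟩ (show infAlpha α ρ σ < t + ε / 2 by linarith)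
    have hden := re_trace_mul_mem_Icc hlo hhi hσ.1 hσ.2
    rw [div_lt_iff₀ (hc.trans_le hden.1)] at hx
    have hub := hA.re_trace_mul_le hlo hhi
    rw [re_trace_mul_smul_sub, htr] at hub
    nlinarith [hden.2]
  · intro h
    obtain ⟨E, hlo, hhi, hE⟩ := hA.exists_re_trace_mul_eq (inv_le_one_of_one_le₀ hα.le)
    rw [re_trace_mul_smul_sub, htr] at hE
    have hden := re_trace_mul_mem_Icc hlo hhi hσ.1 hσ.2
    refine csInf_le_of_le (bddBelow_Icc.mono (testRatios_subset_Icc hα hρ hσ)) ⟨E, hlo, hhi, rfl⟩ ?_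
    rw [div_le_iff₀ (hc.trans_le hden.1)]
    linarith

end Ratios

lemma le_of_forall_one_lt_imp {d f f' : ℝ} (hd : 0 < d) (hf : d ≤ f)
    (h : ∀ α : ℝ, 1 < α → (1 + α⁻¹) * d ≤ (1 - α⁻¹) * f' → (1 + α⁻¹) * d ≤ (1 - α⁻¹) * f) :
    f' ≤ f := by
  by_contra! hlt
  have hd' : d < f' := hf.trans_lt hlt
  have hα : 1 < (f' + d) / (f' - d) := (one_lt_div (by linarith)).2 (by linarith)
  have hs : 0 < f' + d := by linarith
  have hinv : ((f' + d) / (f' - d))⁻¹ = (f' - d) / (f' + d) := inv_div _ _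
  have hadd : 1 + (f' - d) / (f' + d) = 2 * f' / (f' + d) := by field_simp; ring
  have hsub : 1 - (f' - d) / (f' + d) = 2 * d / (f' + d) := by field_simp; ring
  have key := h _ hα (le_of_eq (by rw [hinv, hadd, hsub]; ring))
  rw [hinv, hadd, hsub, div_mul_eq_mul_div, div_mul_eq_mul_div,
    div_le_div_iff_of_pos_right hs] at key
  nlinarith

section Comparison

variable {m : ℕ} {ρ σ : Matrix (Fin n) (Fin n) ℂ} {ρ' σ' : Matrix (Fin m) (Fin m) ℂ}

lemma abs_sub_one_le_traceNorm (hρ : IsDensityMatrix ρ) (hσ : IsDensityMatrix σ) (t : ℝ) :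
    |t - 1| ≤ traceNorm ((t : ℂ) • σ - ρ) := by
  have h := (isHermitian_smul_sub hρ.1.1 hσ.1.1 t).abs_re_trace_le_traceNorm
  simpa [trace_sub, hρ.2, hσ.2] using h

lemma traceNorm_le_of_supAlpha_le_of_infAlpha_le (hρ : IsDensityMatrix ρ)
    (hσ : IsDensityMatrix σ) (hρ' : IsDensityMatrix ρ') (hσ' : IsDensityMatrix σ')
    (h : ∀ α : ℝ, 1 < α →
      supAlpha α ρ' σ' ≤ supAlpha α ρ σ ∧ infAlpha α ρ σ ≤ infAlpha α ρ' σ') (t : ℝ) :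
    traceNorm ((t : ℂ) • σ' - ρ') ≤ traceNorm ((t : ℂ) • σ - ρ) := by
  suffices h1 : ∀ s ≠ (1 : ℝ), traceNorm ((s : ℂ) • σ' - ρ') ≤ traceNorm ((s : ℂ) • σ - ρ) by
    have hclosed := isClosed_le (continuous_traceNorm_smul_sub hρ'.1.1 hσ')
      (continuous_traceNorm_smul_sub hρ.1.1 hσ)
    refine (hclosed.closure_subset_iff (s := {1}ᶜ)).2 h1 ?_
    rw [(dense_compl_singleton (1 : ℝ)).closure_eq]
    trivial
  intro s hs
  have hf := abs_sub_one_le_traceNorm hρ hσ s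
  rcases hs.lt_or_gt with hs | hs
  · rw [abs_of_neg (sub_neg.2 hs), neg_sub] at hf
    refine le_of_forall_one_lt_imp (sub_pos.2 hs) hf fun α hα h' => ?_
    rw [← infAlpha_le_iff hα hρ hσ]
    exact (h α hα).2.trans ((infAlpha_le_iff hα hρ' hσ' s).2 h')
  · rw [abs_of_pos (sub_pos.2 hs)] at hf
    refine le_of_forall_one_lt_imp (sub_pos.2 hs) hf fun α hα h' => ?_
    rw [← le_supAlpha_iff hα hρ hσ]
    exact ((le_supAlpha_iff hα hρ' hσ' s).2 h').trans (h α hα).1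

lemma supAlpha_le_of_traceNorm_le {α : ℝ} (hα : 1 < α) (hρ : IsDensityMatrix ρ)
    (hσ : IsDensityMatrix σ) (hρ' : IsDensityMatrix ρ') (hσ' : IsDensityMatrix σ')
    (h : ∀ t : ℝ, 0 ≤ t → traceNorm ((t : ℂ) • σ' - ρ') ≤ traceNorm ((t : ℂ) • σ - ρ)) :
    supAlpha α ρ' σ' ≤ supAlpha α ρ σ := by
  set s := supAlpha α ρ' σ'
  rw [le_supAlpha_iff hα hρ hσ]
  calc (1 + α⁻¹) * (s - 1) ≤ (1 - α⁻¹) * traceNorm ((s : ℂ) • σ' - ρ') :=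
        (le_supAlpha_iff hα hρ' hσ' s).1 le_rfl
    _ ≤ (1 - α⁻¹) * traceNorm ((s : ℂ) • σ - ρ) :=
        mul_le_mul_of_nonneg_left (h s (zero_le_one.trans (one_le_supAlpha hα hρ' hσ')))
          (sub_nonneg.2 (inv_le_one_of_one_le₀ hα.le))

lemma infAlpha_le_of_traceNorm_le {α : ℝ} (hα : 1 < α) (hρ : IsDensityMatrix ρ)
    (hσ : IsDensityMatrix σ) (hρ' : IsDensityMatrix ρ') (hσ' : IsDensityMatrix σ')
    (h : ∀ t : ℝ, 0 ≤ t → traceNorm ((t : ℂ) • σ' - ρ') ≤ traceNorm ((t : ℂ) • σ - ρ)) :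
    infAlpha α ρ σ ≤ infAlpha α ρ' σ' := by
  set s := infAlpha α ρ' σ'
  rw [infAlpha_le_iff hα hρ hσ]
  calc (1 + α⁻¹) * (1 - s) ≤ (1 - α⁻¹) * traceNorm ((s : ℂ) • σ' - ρ') :=
        (infAlpha_le_iff hα hρ' hσ' s).1 le_rfl
    _ ≤ (1 - α⁻¹) * traceNorm ((s : ℂ) • σ - ρ) :=
        mul_le_mul_of_nonneg_left (h s (infAlpha_nonneg hα hρ' hσ'))
          (sub_nonneg.2 (inv_le_one_of_one_le₀ hα.le))

end Comparison

end

/-- Lemma 4 of the paper: for density matrices `(ρ,σ)` on `ℂ^n` and `(ρ',σ')` on `ℂ^m`,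
the following are equivalent:
(i) `sup_α(ρ/σ) ≥ sup_α(ρ'/σ')` and `inf_α(ρ/σ) ≤ inf_α(ρ'/σ')` for all `α > 1`;
(ii) `‖tσ - ρ‖₁ ≥ ‖tσ' - ρ'‖₁` for all `t ≥ 0`. -/
theorem supAlpha_infAlpha_iff_traceNorm
    {n m : ℕ} (ρ σ : Matrix (Fin n) (Fin n) ℂ) (ρ' σ' : Matrix (Fin m) (Fin m) ℂ)
    (hρ : ρ.PosSemidef) (hρtr : ρ.trace = 1)
    (hσ : σ.PosSemidef) (hσtr : σ.trace = 1)
    (hρ' : ρ'.PosSemidef) (hρ'tr : ρ'.trace = 1)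
    (hσ' : σ'.PosSemidef) (hσ'tr : σ'.trace = 1) :
    (∀ α : ℝ, 1 < α →
        supAlpha α ρ' σ' ≤ supAlpha α ρ σ ∧ infAlpha α ρ σ ≤ infAlpha α ρ' σ') ↔
      (∀ t : ℝ, 0 ≤ t →
        traceNorm ((t : ℂ) • σ' - ρ') ≤ traceNorm ((t : ℂ) • σ - ρ)) := by
  have hρd : IsDensityMatrix ρ := ⟨hρ, hρtr⟩
  have hσd : IsDensityMatrix σ := ⟨hσ, hσtr⟩
  have hρ'd : IsDensityMatrix ρ' := ⟨hρ', hρ'tr⟩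
  have hσ'd : IsDensityMatrix σ' := ⟨hσ', hσ'tr⟩
  exact ⟨fun h t _ => traceNorm_le_of_supAlpha_le_of_infAlpha_le hρd hσd hρ'd hσ'd h t,
    fun h α hα => ⟨supAlpha_le_of_traceNorm_le hα hρd hσd hρ'd hσ'd h,
      infAlpha_le_of_traceNorm_le hα hρd hσd hρ'd hσ'd h⟩⟩
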